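/- arXiv:1703.07433 — 8 statements merged into one kernel-verified Lean document; each statement's English description precedes it below -/
import Mathlib

section
/- Let F be a commutative monoid and let e ∈ F satisfy e*e = 1. Let g, h : F → SignType be monoid homomorphisms with g e = -1 and h e = -1. Then the following are equivalent: (1) h⁻¹({1}) ⊆ g⁻¹({1}); (2) h⁻¹({-1}) ⊆ g⁻¹({-1}); (3) g⁻¹({0,1}) ⊆ h⁻¹({0,1}); (4) Z(g) ⊆ Z(h) and for every a ∈ F with h a ≠ 0 one has g a = h a; (5) h = h² * g (pointwise); (6) h² = h * g (pointwise). -/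
/-!
At each point `a`, with `x = h a` and `y = g a`, conditions (4)–(6) all say `x ≠ 0 → y = x`, i.e. that
`h⁻¹{1} ⊆ g⁻¹{1}` and `h⁻¹{-1} ⊆ g⁻¹{-1}`; condition (3) is the second inclusion in complemented
form. Since `g e = h e = -1`, multiplication by `e` exchanges the preimages of `1` and `-1` under
both characters, so each of these two inclusions implies the other.
-/

/-- Zero-set of a `SignType`-valued function. -/
def Zset {F : Type*} (g : F → SignType) : Set F := {a | g a = 0}

namespace SignType

theorem eq_sq_mul_iff (x y : SignType) : x = x ^ 2 * y ↔ (x ≠ 0 → y = x) := by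
  revert x y; decide

theorem sq_eq_mul_iff (x y : SignType) : x ^ 2 = x * y ↔ (x ≠ 0 → y = x) := by
  revert x y; decide

end SignType

section Functions

variable {α : Type*} (g h : α → SignType)

theorem preimage_zero_one_eq_compl : g ⁻¹' {0, 1} = (g ⁻¹' {-1})ᶜ := by
  ext a
  simp only [Set.mem_preimage, Set.mem_insert_iff, Set.mem_singleton_iff, Set.mem_compl_iff]
  generalize g a = x
  revert x; decide

theorem preimage_one_subset_and_preimage_neg_one_subset_iff :
    h ⁻¹' {1} ⊆ g ⁻¹' {1} ∧ h ⁻¹' {-1} ⊆ g ⁻¹' {-1} ↔ ∀ a, h a ≠ 0 → g a = h a := by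
  simp only [Set.subset_def, Set.mem_preimage, Set.mem_singleton_iff, ← forall_and]
  refine forall_congr' fun a => ?_
  generalize g a = y
  generalize h a = x
  revert x y; decide

theorem zset_subset_of_forall_ne_zero (H : ∀ a, h a ≠ 0 → g a = h a) : Zset g ⊆ Zset h := by
  intro a (hga : g a = 0)
  by_contra (hha : h a ≠ 0)
  exact hha (H a hha ▸ hga)

theorem eq_sq_mul_iff : h = h ^ 2 * g ↔ ∀ a, h a ≠ 0 → g a = h a := by
  simp only [funext_iff, Pi.mul_apply, Pi.pow_apply, SignType.eq_sq_mul_iff]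

theorem sq_eq_mul_iff : h ^ 2 = h * g ↔ ∀ a, h a ≠ 0 → g a = h a := by
  simp only [funext_iff, Pi.mul_apply, Pi.pow_apply, SignType.sq_eq_mul_iff]

end Functions

section Characters

variable {M : Type*} [Monoid M] {e : M}

theorem MonoidHom.preimage_neg_one_eq_of_map_eq_neg_one (φ : M →* SignType) (he : φ e = -1) :
    φ ⁻¹' {-1} = (· * e) ⁻¹' (φ ⁻¹' {1}) := by
  ext a
  simp only [Set.mem_preimage, Set.mem_singleton_iff, map_mul, he]
  generalize φ a = x
  revert x; decide

theorem MonoidHom.preimage_one_eq_of_map_eq_neg_one (φ : M →* SignType) (he : φ e = -1) :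
    φ ⁻¹' {1} = (· * e) ⁻¹' (φ ⁻¹' {-1}) := by
  ext a
  simp only [Set.mem_preimage, Set.mem_singleton_iff, map_mul, he]
  generalize φ a = x
  revert x; decide

theorem MonoidHom.preimage_one_subset_iff_preimage_neg_one_subset (g h : M →* SignType)
    (hge : g e = -1) (hhe : h e = -1) : h ⁻¹' {1} ⊆ g ⁻¹' {1} ↔ h ⁻¹' {-1} ⊆ g ⁻¹' {-1} := by
  constructor <;> intro H
  · rw [g.preimage_neg_one_eq_of_map_eq_neg_one hge, h.preimage_neg_one_eq_of_map_eq_neg_one hhe]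
    exact Set.preimage_mono H
  · rw [g.preimage_one_eq_of_map_eq_neg_one hge, h.preimage_one_eq_of_map_eq_neg_one hhe]
    exact Set.preimage_mono H

end Characters

theorem tfae_specialization_general {F : Type*} [CommMonoid F] (e : F)
    (g h : F →* SignType) (hge : g e = -1) (hhe : h e = -1) :
    List.TFAE [
      ⇑h ⁻¹' {1} ⊆ ⇑g ⁻¹' {1},
      ⇑h ⁻¹' {-1} ⊆ ⇑g ⁻¹' {-1},
      ⇑g ⁻¹' {0, 1} ⊆ ⇑h ⁻¹' {0, 1},
      Zset ⇑g ⊆ Zset ⇑h ∧ ∀ a : F, h a ≠ 0 → g a = h a,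
      ⇑h = ⇑h ^ 2 * ⇑g,
      ⇑h ^ 2 = ⇑h * ⇑g ] := by
  have h12 := MonoidHom.preimage_one_subset_iff_preimage_neg_one_subset g h hge hhe
  tfae_have 1 ↔ 2 := h12
  tfae_have 3 ↔ 2 := by
    rw [preimage_zero_one_eq_compl, preimage_zero_one_eq_compl, Set.compl_subset_compl]
  tfae_have 1 ↔ 4 := by
    rw [and_iff_right_of_imp (zset_subset_of_forall_ne_zero g h),
      ← preimage_one_subset_and_preimage_neg_one_subset_iff, ← h12, and_self]
  tfae_have 4 ↔ 5 := by
    rw [eq_sq_mul_iff, and_iff_right_of_imp (zset_subset_of_forall_ne_zero g h)]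
  tfae_have 4 ↔ 6 := by
    rw [sq_eq_mul_iff, and_iff_right_of_imp (zset_subset_of_forall_ne_zero g h)]
  tfae_finish

theorem tfae_specialization {F : Type*} [CommMonoid F] (e : F) (he : e * e = 1)
    (g h : F →* SignType) (hge : g e = -1) (hhe : h e = -1) :
    List.TFAE [
      ⇑h ⁻¹' {1} ⊆ ⇑g ⁻¹' {1},
      ⇑h ⁻¹' {-1} ⊆ ⇑g ⁻¹' {-1},
      ⇑g ⁻¹' {0, 1} ⊆ ⇑h ⁻¹' {0, 1},
      Zset ⇑g ⊆ Zset ⇑h ∧ ∀ a : F, h a ≠ 0 → g a = h a,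
      ⇑h = ⇑h ^ 2 * ⇑g,
      ⇑h ^ 2 = ⇑h * ⇑g ] :=
  tfae_specialization_general e g h hge hhe
end

section
/- Let F be a type and u, g, h : F → SignType. If u ⇝ g and u ⇝ h, then Z(g) ⊆ Z(h) if and only if g ⇝ h. -/
/-- `h` is a specialization of `g` (written `g ⇝ h`): `h = h² * g` pointwise. -/
def Spez {F : Type*} (g h : F → SignType) : Prop := h = h ^ 2 * g

theorem SignType.eq_sq_mul_iff_s3 {y z : SignType} : z = z ^ 2 * y ↔ z = 0 ∨ z = y := by
  revert y z
  decide

theorem spez_iff_forall_ne_zero_eq {F : Type*} {g h : F → SignType} :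
    Spez g h ↔ ∀ a, h a ≠ 0 → h a = g a := by
  simp only [Spez, funext_iff, Pi.mul_apply, Pi.pow_apply, SignType.eq_sq_mul_iff_s3,
    or_iff_not_imp_left]

theorem zeroset_subset_iff_spez_of_common_generization {F : Type*}
    (u g h : F → SignType) (hug : Spez u g) (huh : Spez u h) :
    Zset g ⊆ Zset h ↔ Spez g h := by
  rw [spez_iff_forall_ne_zero_eq] at hug huh ⊢
  constructor
  · intro hZ a ha
    have hga : g a ≠ 0 := fun hg => ha (hZ hg)
    rw [huh a ha, hug a hga]
  · intro hgh a (hga : g a = 0)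
    by_contra ha
    exact ha ((hgh a ha).trans hga)
end

section
/- Let F be a type, r a natural number, and let g₁, …, g_r, f₁, …, f_r, h : F → SignType be such that ⋃_{i=1}^r Z(gᵢ) ⊆ Z(h), and for each i = 1, …, r, gᵢ ⇝ fᵢ and Z(gᵢ) ⊆ Z(fᵢ) ⊆ Z(h). Then h * g₁ * ⋯ * g_r = h * f₁ * ⋯ * f_r (pointwise products). -/
/-!
Off `Z(h)` each `fᵢ` is nonzero, so `fᵢ² = 1` there and the relation `fᵢ = fᵢ² gᵢ` forces
`fᵢ = gᵢ`; on `Z(h)` both sides vanish. Hence `h gᵢ = h fᵢ` for every `i`, and such equalities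
multiply: in any commutative monoid `h xᵢ = h yᵢ` for all `i` gives `h ∏ xᵢ = h ∏ yᵢ`.
-/

theorem SignType.sq_eq_one_of_ne_zero {s : SignType} (hs : s ≠ 0) : s ^ 2 = 1 := by
  cases s <;> first | exact absurd rfl hs | rfl

theorem Finset.mul_prod_eq_mul_prod_of_forall_mul_eq {ι M : Type*} [CommMonoid M]
    (s : Finset ι) (c : M) {x y : ι → M} (hxy : ∀ i ∈ s, c * x i = c * y i) :
    c * ∏ i ∈ s, x i = c * ∏ i ∈ s, y i := by
  classical
  induction s using Finset.induction_on with
  | empty => simp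
  | insert j s hj ih =>
    have ih := ih fun i hi => hxy i (Finset.mem_insert_of_mem hi)
    calc c * ∏ i ∈ insert j s, x i = x j * (c * ∏ i ∈ s, x i) := by
          rw [Finset.prod_insert hj, mul_left_comm]
      _ = (c * x j) * ∏ i ∈ s, y i := by rw [ih, mul_left_comm, mul_assoc]
      _ = c * ∏ i ∈ insert j s, y i := by
          rw [hxy j (Finset.mem_insert_self j s), Finset.prod_insert hj, mul_assoc]

theorem Spez.apply_eq_of_ne_zero {F : Type*} {g f : F → SignType} (hspez : Spez g f) {a : F}
    (ha : f a ≠ 0) : f a = g a := by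
  have hfa : f a = f a ^ 2 * g a := congrFun hspez a
  rwa [SignType.sq_eq_one_of_ne_zero ha, one_mul] at hfa

theorem Spez.mul_eq_mul_of_zset_subset {F : Type*} {g f h : F → SignType} (hspez : Spez g f)
    (hfh : Zset f ⊆ Zset h) : h * g = h * f := by
  funext a
  by_cases ha : h a = 0
  · simp [ha]
  · have hfa : f a ≠ 0 := fun hf => ha (hfh hf)
    simp only [Pi.mul_apply, hspez.apply_eq_of_ne_zero hfa]

theorem prod_eq_of_spez_general {F : Type*} (r : ℕ)
    (g f : Fin r → (F → SignType)) (h : F → SignType)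
    (hspez : ∀ i, Spez (g i) (f i))
    (hfh : ∀ i, Zset (f i) ⊆ Zset h) :
    h * ∏ i, g i = h * ∏ i, f i :=
  Finset.univ.mul_prod_eq_mul_prod_of_forall_mul_eq h fun i _ =>
    (hspez i).mul_eq_mul_of_zset_subset (hfh i)

theorem prod_eq_of_spez {F : Type*} (r : ℕ)
    (g f : Fin r → (F → SignType)) (h : F → SignType)
    (hU : (⋃ i, Zset (g i)) ⊆ Zset h)
    (hspez : ∀ i, Spez (g i) (f i))
    (hgf : ∀ i, Zset (g i) ⊆ Zset (f i))
    (hfh : ∀ i, Zset (f i) ⊆ Zset h) :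
    h * ∏ i, g i = h * ∏ i, f i :=
  prod_eq_of_spez_general r g f h hspez hfh
end

section
/- Let F be a type, X a fan-set on F, I ⊆ F, and g₁, g₂ ∈ X with Z(g₁) ⊆ I and Z(g₂) ⊆ I. Then the map h ↦ h * g₁ * g₂ sends the level L_I = {h ∈ X | Z(h) = I} into itself and is an involutive bijection of L_I onto itself. -/
/-- A fan-set: a set of `SignType`-valued functions closed under products of
any three of its elements. -/
def IsFanSet {F : Type*} (X : Set (F → SignType)) : Prop :=
  ∀ a ∈ X, ∀ b ∈ X, ∀ c ∈ X, a * b * c ∈ X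

theorem SignType.mul_self_eq_one_iff {a : SignType} : a * a = 1 ↔ a ≠ 0 := by
  decide +revert

section ZeroSet

variable {F : Type*}

theorem Zset_mul (g h : F → SignType) : Zset (g * h) = Zset g ∪ Zset h :=
  Set.ext fun _ => mul_eq_zero

theorem mul_mul_self_of_Zset_subset {g h : F → SignType} (hgh : Zset g ⊆ Zset h) :
    h * g * g = h := by
  funext a
  by_cases ha : h a = 0
  · simp only [Pi.mul_apply, ha, zero_mul]
  · have hga : g a * g a = 1 := SignType.mul_self_eq_one_iff.2 fun hg => ha (hgh hg)
    simp only [Pi.mul_apply, mul_assoc, hga, mul_one]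

theorem Zset_mul_mul_of_subset {h g₁ g₂ : F → SignType}
    (hZ₁ : Zset g₁ ⊆ Zset h) (hZ₂ : Zset g₂ ⊆ Zset h) : Zset (h * g₁ * g₂) = Zset h := by
  rw [Zset_mul, Zset_mul, Set.union_eq_left.2 hZ₁, Set.union_eq_left.2 hZ₂]

theorem mul_mul_mul_mul_of_Zset_subset {h g₁ g₂ : F → SignType}
    (hZ₁ : Zset g₁ ⊆ Zset h) (hZ₂ : Zset g₂ ⊆ Zset h) : h * g₁ * g₂ * g₁ * g₂ = h := by
  calc h * g₁ * g₂ * g₁ * g₂ = h * g₁ * g₁ * g₂ * g₂ := by rw [mul_right_comm (h * g₁) g₂ g₁]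
    _ = h := by rw [mul_mul_self_of_Zset_subset hZ₁, mul_mul_self_of_Zset_subset hZ₂]

end ZeroSet

theorem involution_of_level {F : Type*} (X : Set (F → SignType)) (hX : IsFanSet X)
    (I : Set F) (g₁ g₂ : F → SignType) (hg₁ : g₁ ∈ X) (hg₂ : g₂ ∈ X)
    (hZ₁ : Zset g₁ ⊆ I) (hZ₂ : Zset g₂ ⊆ I) :
    (∀ h ∈ {h | h ∈ X ∧ Zset h = I}, h * g₁ * g₂ ∈ {h | h ∈ X ∧ Zset h = I}) ∧
    (∀ h ∈ {h | h ∈ X ∧ Zset h = I}, h * g₁ * g₂ * g₁ * g₂ = h) ∧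
    Set.BijOn (fun h => h * g₁ * g₂)
      {h | h ∈ X ∧ Zset h = I} {h | h ∈ X ∧ Zset h = I} := by
  have mapsTo : ∀ h ∈ {h | h ∈ X ∧ Zset h = I}, h * g₁ * g₂ ∈ {h | h ∈ X ∧ Zset h = I} := by
    rintro h ⟨hhX, rfl⟩
    exact ⟨hX h hhX g₁ hg₁ g₂ hg₂, Zset_mul_mul_of_subset hZ₁ hZ₂⟩
  have involutive : ∀ h ∈ {h | h ∈ X ∧ Zset h = I}, h * g₁ * g₂ * g₁ * g₂ = h := by
    rintro h ⟨-, rfl⟩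
    exact mul_mul_mul_mul_of_Zset_subset hZ₁ hZ₂
  exact ⟨mapsTo, involutive,
    Set.InvOn.bijOn (f' := fun h => h * g₁ * g₂) ⟨involutive, involutive⟩ mapsTo mapsTo⟩
end

section
/- Let F be a type, X a fan-set on F, and J ⊆ I subsets of F. Then S^I_J = {h ∈ X | Z(h) = I and ∃ u ∈ X, u ⇝ h ∧ Z(u) = J} is closed under pointwise products of any three of its elements (so that it is again a fan of its level). -/
/-- `SLev X J I`: elements of `X` of level `I` having a generization of level `J`. -/
def SLev {F : Type*} (X : Set (F → SignType)) (J I : Set F) : Set (F → SignType) :=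
  {h | h ∈ X ∧ Zset h = I ∧ ∃ u ∈ X, Spez u h ∧ Zset u = J}

section

variable {F : Type*}

theorem Zset_mul_mul_of_eq {a b c : F → SignType} {S : Set F} (ha : Zset a = S)
    (hb : Zset b = S) (hc : Zset c = S) : Zset (a * b * c) = S := by
  rw [Zset_mul, Zset_mul, ha, hb, hc, Set.union_self, Set.union_self]

theorem Spez.mul {u v a b : F → SignType} (ha : Spez u a) (hb : Spez v b) :
    Spez (u * v) (a * b) := by
  unfold Spez at *
  conv_lhs => rw [ha, hb]
  rw [mul_pow, mul_mul_mul_comm]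

end

theorem SSet_closed_three_products_general {F : Type*} (X : Set (F → SignType))
    (hX : IsFanSet X) (J I : Set F) :
    ∀ a ∈ SLev X J I, ∀ b ∈ SLev X J I, ∀ c ∈ SLev X J I,
      a * b * c ∈ SLev X J I := by
  rintro a ⟨haX, haZ, u, huX, hua, huZ⟩ b ⟨hbX, hbZ, v, hvX, hvb, hvZ⟩
    c ⟨hcX, hcZ, w, hwX, hwc, hwZ⟩
  exact ⟨hX a haX b hbX c hcX, Zset_mul_mul_of_eq haZ hbZ hcZ,
    u * v * w, hX u huX v hvX w hwX, (hua.mul hvb).mul hwc, Zset_mul_mul_of_eq huZ hvZ hwZ⟩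

theorem SSet_closed_three_products {F : Type*} (X : Set (F → SignType))
    (hX : IsFanSet X) (J I : Set F) (hJI : J ⊆ I) :
    ∀ a ∈ SLev X J I, ∀ b ∈ SLev X J I, ∀ c ∈ SLev X J I,
      a * b * c ∈ SLev X J I :=
  SSet_closed_three_products_general X hX J I
end

section
/- Let F be a type, X a fan-set on F, and J ⊆ J₁ ⊆ J₂ ⊆ I subsets of F. For h ∈ X set B(h) := {g ∈ S^{J₂}_{J₁} | g ⇝ h}. Then for any h₁, h₂ ∈ S^I_J there is a bijection between B(h₁) and B(h₂); explicitly, if u₁, u₂ ∈ X satisfy uᵢ ⇝ hᵢ and Z(uᵢ) = J (i = 1,2), then the map g ↦ g * u₁ * u₂ is a bijection of B(h₁) onto B(h₂). -/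
/-!
Off `Z(u₁) = Z(u₂) = J`, both `u₁` and `u₂` are `±1`-valued, and every `g` in either set vanishes on
`J ⊆ J₂`, so multiplying by `u₁ * u₂` neither changes `Z(g)` nor `Z` of a generization of `g`, and
doing it twice is the identity. Where `h₁` (equivalently `h₂`) is nonzero, a specialization forces
`g = h₁ = u₁` and `u₂ = h₂`, hence `g * u₁ * u₂ = h₂` there; this is why `g ↦ g * u₁ * u₂` carries
the generizations of `h₁` to those of `h₂`.
-/

lemma SignType.mul_self_of_ne_zero : ∀ {s : SignType}, s ≠ 0 → s * s = 1 := by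
  decide

section

variable {F : Type*}

lemma zset_mul (f g : F → SignType) : Zset (f * g) = Zset f ∪ Zset g := by
  ext a
  simp [Zset]

lemma zset_mul_mul_of_subset {f u v : F → SignType} (hu : Zset u ⊆ Zset f)
    (hv : Zset v ⊆ Zset f) : Zset (f * u * v) = Zset f := by
  rw [zset_mul, zset_mul, Set.union_eq_left.2 hu, Set.union_eq_left.2 hv]

lemma mul_mul_self_of_zset_subset {f u : F → SignType} (hu : Zset u ⊆ Zset f) :
    f * u * u = f := by
  funext a
  by_cases ha : u a = 0
  · simp [show f a = 0 from hu ha]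
  · simp [mul_assoc, SignType.mul_self_of_ne_zero ha]

lemma mul_mul_mul_mul_cancel {f u v : F → SignType} (hu : Zset u ⊆ Zset f)
    (hv : Zset v ⊆ Zset f) : f * u * v * v * u = f := by
  have hv' : Zset v ⊆ Zset (f * u) := (zset_mul f u).symm ▸ hv.trans Set.subset_union_left
  rw [mul_mul_self_of_zset_subset hv', mul_mul_self_of_zset_subset hu]

lemma spez_iff {g h : F → SignType} : Spez g h ↔ ∀ a, h a ≠ 0 → g a = h a := by
  simp only [Spez, funext_iff, Pi.mul_apply, Pi.pow_apply]
  refine forall_congr' fun a => ?_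
  generalize g a = x
  generalize h a = y
  revert x y
  decide

lemma Spez.mul_mul {g h : F → SignType} (hgh : Spez g h) (u v : F → SignType) :
    Spez (g * u * v) (h * u * v) := by
  rw [spez_iff] at hgh ⊢
  intro a ha
  simp only [Pi.mul_apply, ne_eq, mul_eq_zero, not_or] at ha ⊢
  rw [hgh a ha.1.1]

lemma Spez.mul_mul_of_zset_eq {g h₁ h₂ u₁ u₂ : F → SignType} (hg : Spez g h₁)
    (hs₁ : Spez u₁ h₁) (hs₂ : Spez u₂ h₂) (hZ : Zset h₁ = Zset h₂) :
    Spez (g * u₁ * u₂) h₂ := by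
  rw [spez_iff] at hg hs₁ hs₂ ⊢
  intro a ha
  have ha₁ : h₁ a ≠ 0 := fun h => ha (show a ∈ Zset h₂ from hZ ▸ h)
  simp [hg a ha₁, hs₁ a ha₁, hs₂ a ha, SignType.mul_self_of_ne_zero ha₁]

lemma mapsTo_mul_mul {X : Set (F → SignType)} (hX : IsFanSet X) {J J₁ J₂ : Set F}
    (hJ : J ⊆ J₁) (hJ₁ : J₁ ⊆ J₂) {h₁ h₂ u₁ u₂ : F → SignType} (hZh : Zset h₁ = Zset h₂)
    (hu₁X : u₁ ∈ X) (hu₂X : u₂ ∈ X) (hs₁ : Spez u₁ h₁) (hs₂ : Spez u₂ h₂)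
    (hZu₁ : Zset u₁ = J) (hZu₂ : Zset u₂ = J) :
    Set.MapsTo (fun g => g * u₁ * u₂)
      {g | g ∈ SLev X J₁ J₂ ∧ Spez g h₁}
      {g | g ∈ SLev X J₁ J₂ ∧ Spez g h₂} := by
  rintro g ⟨⟨hgX, hZg, v, hvX, hsv, hZv⟩, hgh⟩
  have hZ : ∀ {f : F → SignType}, J ⊆ Zset f → Zset (f * u₁ * u₂) = Zset f := fun hf =>
    zset_mul_mul_of_subset (hZu₁ ▸ hf) (hZu₂ ▸ hf)
  refine ⟨⟨hX _ hgX _ hu₁X _ hu₂X, ?_, v * u₁ * u₂, hX _ hvX _ hu₁X _ hu₂X, hsv.mul_mul u₁ u₂, ?_⟩,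
    hgh.mul_mul_of_zset_eq hs₁ hs₂ hZh⟩
  · rw [hZ (hZg ▸ hJ.trans hJ₁), hZg]
  · rw [hZ (hZv ▸ hJ), hZv]
end

theorem bijOn_B_sets_general {F : Type*} (X : Set (F → SignType)) (hX : IsFanSet X)
    (J J₁ J₂ I : Set F) (hJ : J ⊆ J₁) (hJ₁ : J₁ ⊆ J₂)
    (h₁ h₂ : F → SignType) (hh₁ : h₁ ∈ SLev X J I) (hh₂ : h₂ ∈ SLev X J I)
    (u₁ u₂ : F → SignType) (hu₁X : u₁ ∈ X) (hu₂X : u₂ ∈ X)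
    (hs₁ : Spez u₁ h₁) (hs₂ : Spez u₂ h₂)
    (hZu₁ : Zset u₁ = J) (hZu₂ : Zset u₂ = J) :
    Set.BijOn (fun g => g * u₁ * u₂)
      {g | g ∈ SLev X J₁ J₂ ∧ Spez g h₁}
      {g | g ∈ SLev X J₁ J₂ ∧ Spez g h₂} := by
  obtain ⟨-, hZh₁, -⟩ := hh₁
  obtain ⟨-, hZh₂, -⟩ := hh₂
  have hZh : Zset h₁ = Zset h₂ := hZh₁.trans hZh₂.symm
  have cancel : ∀ {v w : F → SignType}, Zset v = J → Zset w = J →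
      ∀ g ∈ SLev X J₁ J₂, g * v * w * w * v = g := by
    rintro v w hv hw g ⟨-, hZg, -⟩
    exact mul_mul_mul_mul_cancel (hv ▸ hZg ▸ hJ.trans hJ₁) (hw ▸ hZg ▸ hJ.trans hJ₁)
  refine Set.InvOn.bijOn (f' := fun g => g * u₂ * u₁)
    ⟨fun g hg => cancel hZu₁ hZu₂ g hg.1, fun g hg => cancel hZu₂ hZu₁ g hg.1⟩
    (mapsTo_mul_mul hX hJ hJ₁ hZh hu₁X hu₂X hs₁ hs₂ hZu₁ hZu₂)
    (mapsTo_mul_mul hX hJ hJ₁ hZh.symm hu₂X hu₁X hs₂ hs₁ hZu₂ hZu₁)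

theorem bijOn_B_sets {F : Type*} (X : Set (F → SignType)) (hX : IsFanSet X)
    (J J₁ J₂ I : Set F) (hJ : J ⊆ J₁) (hJ₁ : J₁ ⊆ J₂) (hJ₂ : J₂ ⊆ I)
    (h₁ h₂ : F → SignType) (hh₁ : h₁ ∈ SLev X J I) (hh₂ : h₂ ∈ SLev X J I)
    (u₁ u₂ : F → SignType) (hu₁X : u₁ ∈ X) (hu₂X : u₂ ∈ X)
    (hs₁ : Spez u₁ h₁) (hs₂ : Spez u₂ h₂)
    (hZu₁ : Zset u₁ = J) (hZu₂ : Zset u₂ = J) :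
    Set.BijOn (fun g => g * u₁ * u₂)
      {g | g ∈ SLev X J₁ J₂ ∧ Spez g h₁}
      {g | g ∈ SLev X J₁ J₂ ∧ Spez g h₂} :=
  bijOn_B_sets_general X hX J J₁ J₂ I hJ hJ₁ h₁ h₂ hh₁ hh₂ u₁ u₂ hu₁X hu₂X hs₁ hs₂ hZu₁ hZu₂
end

section
/- Let F be a type, X a fan-set on F, and h ∈ X. Then the set of generizations P_h = {g ∈ X | g ⇝ h} is closed under pointwise products of any three of its elements (so that the set of predecessors of any point of an abstract-real-spectrum fan under specialization is again a fan). -/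
/-! Every sign function satisfies `h³ = h`, hence `h² = h⁶`; so `h² * (a * b * c)` splits as
`(h² * a) * (h² * b) * (h² * c) = h³ = h` whenever `h` is a specialization of `a`, `b` and `c`. -/

theorem sq_mul_mul_mul_eq_of_pow_three_eq {M : Type*} [CommMonoid M] {h a b c : M}
    (h3 : h ^ 3 = h) (ha : h = h ^ 2 * a) (hb : h = h ^ 2 * b) (hc : h = h ^ 2 * c) :
    h = h ^ 2 * (a * b * c) :=
  calc h = h ^ 3 := h3.symm
    _ = h * h * h := pow_three' h
    _ = (h ^ 2 * a) * (h ^ 2 * b) * (h ^ 2 * c) := by rw [← ha, ← hb, ← hc]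
    _ = (h ^ 3) ^ 2 * (a * b * c) := by simp only [pow_succ, pow_zero, one_mul]; ac_rfl
    _ = h ^ 2 * (a * b * c) := by rw [h3]

theorem SignType.pi_pow_three {F : Type*} (h : F → SignType) : h ^ 3 = h :=
  funext fun x => SignType.pow_odd (h x) (by decide)

theorem Spez.mul_mul_s17 {F : Type*} {a b c h : F → SignType}
    (ha : Spez a h) (hb : Spez b h) (hc : Spez c h) : Spez (a * b * c) h :=
  sq_mul_mul_mul_eq_of_pow_three_eq (SignType.pi_pow_three h) ha hb hc

theorem generizations_closed_three_products_general {F : Type*}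
    (X : Set (F → SignType)) (hX : IsFanSet X) (h : F → SignType) :
    ∀ a ∈ {g | g ∈ X ∧ Spez g h}, ∀ b ∈ {g | g ∈ X ∧ Spez g h},
      ∀ c ∈ {g | g ∈ X ∧ Spez g h}, a * b * c ∈ {g | g ∈ X ∧ Spez g h} := by
  rintro a ⟨haX, ha⟩ b ⟨hbX, hb⟩ c ⟨hcX, hc⟩
  exact ⟨hX a haX b hbX c hcX, ha.mul_mul_s17 hb hc⟩

theorem generizations_closed_three_products {F : Type*}
    (X : Set (F → SignType)) (hX : IsFanSet X) (h : F → SignType) (hh : h ∈ X) :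
    ∀ a ∈ {g | g ∈ X ∧ Spez g h}, ∀ b ∈ {g | g ∈ X ∧ Spez g h},
      ∀ c ∈ {g | g ∈ X ∧ Spez g h}, a * b * c ∈ {g | g ∈ X ∧ Spez g h} :=
  generizations_closed_three_products_general X hX h
end

section
/- Let F₁, F₂ be types and let X₁ be a fan-set on F₁ such that: (total comparability) for all g, h ∈ X₁, Z(g) ⊆ Z(h) or Z(h) ⊆ Z(g); and (successor existence) for all g, h ∈ X₁ with Z(g) ⊆ Z(h) there exists f ∈ X₁ with g ⇝ f and Z(f) = Z(h). Let X₂ be a set of functions F₂ → SignType and F : X₁ → X₂ a map. Then the following are equivalent: (i) F preserves 3-products: for all h₁, h₂, h₃ ∈ X₁ with h₁*h₂*h₃ ∈ X₁ one has F(h₁*h₂*h₃) = F(h₁)*F(h₂)*F(h₃); (ii) F preserves 3-products of elements of the same level (for all h₁, h₂, h₃ ∈ X₁ with Z(h₁) = Z(h₂) = Z(h₃) and h₁*h₂*h₃ ∈ X₁, F(h₁*h₂*h₃) = F(h₁)*F(h₂)*F(h₃)) and F is monotone for specialization (for g, h ∈ X₁, g ⇝ h implies F(g) ⇝ F(h)).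 -/
/-! If `g ⇝ f` and `Z(f) = Z(k)`, then `f * k = g * k`. So for `h₁, h₂, h₃` with `Z(h₃)` the
largest zero-set, successors `f₁, f₂` of `h₁, h₂` on the level of `h₃` give `h₁ h₂ h₃ = f₁ f₂ h₃`,
a product within one level. On the image side `Φ h₁ ⇝ Φ f₁` by monotonicity and
`Φ f₁ Φ f₁ Φ h₃ = Φ h₃` by the one-level rule, which is all the same identity needs to run
backwards. -/

section SignFunctions

variable {F : Type*} {f g k f₁ f₂ g₁ g₂ : F → SignType}

theorem mul_self_mul_eq_of_zset_eq (h : Zset f = Zset g) : f * f * g = g := by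
  funext a
  have hz : f a = 0 ↔ g a = 0 := Set.ext_iff.mp h a
  simp only [Pi.mul_apply]
  revert hz
  generalize f a = s, g a = t
  revert s t
  decide

theorem Spez.mul_eq_mul (hgf : Spez g f) (hk : f * f * k = k) : f * k = g * k :=
  calc f * k = f ^ 2 * g * k := congrArg (· * k) hgf
    _ = g * (f * f * k) := by rw [pow_two]; ac_rfl
    _ = g * k := by rw [hk]

theorem Spez.mul_mul_eq_mul_mul (h₁ : Spez g₁ f₁) (h₂ : Spez g₂ f₂)
    (hk₁ : f₁ * f₁ * k = k) (hk₂ : f₂ * f₂ * k = k) : f₁ * f₂ * k = g₁ * g₂ * k :=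
  calc f₁ * f₂ * k = f₁ * (f₂ * k) := mul_assoc _ _ _
    _ = f₁ * (g₂ * k) := by rw [h₂.mul_eq_mul hk₂]
    _ = g₂ * (f₁ * k) := mul_left_comm _ _ _
    _ = g₂ * (g₁ * k) := by rw [h₁.mul_eq_mul hk₁]
    _ = g₁ * g₂ * k := by rw [mul_left_comm, mul_assoc]

end SignFunctions

section ThreeProducts

variable {F₁ F₂ : Type*} {X₁ : Set (F₁ → SignType)} {Φ : (F₁ → SignType) → (F₂ → SignType)}

theorem map_mul_mul_of_zset_subset
    (hsucc : ∀ g ∈ X₁, ∀ h ∈ X₁, Zset g ⊆ Zset h → ∃ f ∈ X₁, Spez g f ∧ Zset f = Zset h)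
    (hlevel : ∀ h₁ ∈ X₁, ∀ h₂ ∈ X₁, ∀ h₃ ∈ X₁,
      Zset h₁ = Zset h₂ → Zset h₂ = Zset h₃ → h₁ * h₂ * h₃ ∈ X₁ →
      Φ (h₁ * h₂ * h₃) = Φ h₁ * Φ h₂ * Φ h₃)
    (hmono : ∀ g ∈ X₁, ∀ h ∈ X₁, Spez g h → Spez (Φ g) (Φ h))
    {g₁ g₂ g₃ : F₁ → SignType} (m₁ : g₁ ∈ X₁) (m₂ : g₂ ∈ X₁) (m₃ : g₃ ∈ X₁)
    (h₁₃ : Zset g₁ ⊆ Zset g₃) (h₂₃ : Zset g₂ ⊆ Zset g₃) (hp : g₁ * g₂ * g₃ ∈ X₁) :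
    Φ (g₁ * g₂ * g₃) = Φ g₁ * Φ g₂ * Φ g₃ := by
  obtain ⟨f₁, mf₁, sp₁, z₁⟩ := hsucc g₁ m₁ g₃ m₃ h₁₃
  obtain ⟨f₂, mf₂, sp₂, z₂⟩ := hsucc g₂ m₂ g₃ m₃ h₂₃
  have k₁ := mul_self_mul_eq_of_zset_eq z₁
  have k₂ := mul_self_mul_eq_of_zset_eq z₂
  have hg : f₁ * f₂ * g₃ = g₁ * g₂ * g₃ := sp₁.mul_mul_eq_mul_mul sp₂ k₁ k₂
  have level_self {f : F₁ → SignType} (mf : f ∈ X₁) (z : Zset f = Zset g₃)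
      (k : f * f * g₃ = g₃) : Φ f * Φ f * Φ g₃ = Φ g₃ := by
    rw [← hlevel f mf f mf g₃ m₃ rfl z (k.symm ▸ m₃), k]
  calc Φ (g₁ * g₂ * g₃) = Φ (f₁ * f₂ * g₃) := by rw [hg]
    _ = Φ f₁ * Φ f₂ * Φ g₃ := hlevel f₁ mf₁ f₂ mf₂ g₃ m₃ (z₁.trans z₂.symm) z₂ (hg ▸ hp)
    _ = Φ g₁ * Φ g₂ * Φ g₃ :=
      (hmono g₁ m₁ f₁ mf₁ sp₁).mul_mul_eq_mul_mul (hmono g₂ m₂ f₂ mf₂ sp₂)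
        (level_self mf₁ z₁ k₁) (level_self mf₂ z₂ k₂)

theorem map_mul_mul_of_zset_total
    (htot : ∀ g ∈ X₁, ∀ h ∈ X₁, Zset g ⊆ Zset h ∨ Zset h ⊆ Zset g)
    (hsucc : ∀ g ∈ X₁, ∀ h ∈ X₁, Zset g ⊆ Zset h → ∃ f ∈ X₁, Spez g f ∧ Zset f = Zset h)
    (hlevel : ∀ h₁ ∈ X₁, ∀ h₂ ∈ X₁, ∀ h₃ ∈ X₁,
      Zset h₁ = Zset h₂ → Zset h₂ = Zset h₃ → h₁ * h₂ * h₃ ∈ X₁ →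
      Φ (h₁ * h₂ * h₃) = Φ h₁ * Φ h₂ * Φ h₃)
    (hmono : ∀ g ∈ X₁, ∀ h ∈ X₁, Spez g h → Spez (Φ g) (Φ h))
    {h₁ h₂ h₃ : F₁ → SignType} (m₁ : h₁ ∈ X₁) (m₂ : h₂ ∈ X₁) (m₃ : h₃ ∈ X₁)
    (hp : h₁ * h₂ * h₃ ∈ X₁) :
    Φ (h₁ * h₂ * h₃) = Φ h₁ * Φ h₂ * Φ h₃ := by
  have key := @map_mul_mul_of_zset_subset _ _ _ _ hsucc hlevel hmono
  rcases htot h₁ m₁ h₂ m₂ with h₁₂ | h₂₁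
  · rcases htot h₂ m₂ h₃ m₃ with h₂₃ | h₃₂
    · exact key m₁ m₂ m₃ (h₁₂.trans h₂₃) h₂₃ hp
    · rw [mul_right_comm h₁] at hp ⊢
      rw [mul_right_comm (Φ h₁)]
      exact key m₁ m₃ m₂ h₁₂ h₃₂ hp
  · rcases htot h₁ m₁ h₃ m₃ with h₁₃ | h₃₁
    · exact key m₁ m₂ m₃ h₁₃ (h₂₁.trans h₁₃) hp
    · rw [mul_rotate h₁] at hp ⊢
      rw [mul_rotate (Φ h₁)]
      exact key m₂ m₃ m₁ h₂₁ h₃₁ hp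

end ThreeProducts

theorem preserves_three_products_iff_general {F₁ F₂ : Type*}
    (X₁ : Set (F₁ → SignType))
    (htot : ∀ g ∈ X₁, ∀ h ∈ X₁, Zset g ⊆ Zset h ∨ Zset h ⊆ Zset g)
    (hsucc : ∀ g ∈ X₁, ∀ h ∈ X₁, Zset g ⊆ Zset h →
      ∃ f ∈ X₁, Spez g f ∧ Zset f = Zset h)
    (Φ : (F₁ → SignType) → (F₂ → SignType)) :
    (∀ h₁ ∈ X₁, ∀ h₂ ∈ X₁, ∀ h₃ ∈ X₁, h₁ * h₂ * h₃ ∈ X₁ →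
        Φ (h₁ * h₂ * h₃) = Φ h₁ * Φ h₂ * Φ h₃)
    ↔
    ((∀ h₁ ∈ X₁, ∀ h₂ ∈ X₁, ∀ h₃ ∈ X₁,
        Zset h₁ = Zset h₂ → Zset h₂ = Zset h₃ → h₁ * h₂ * h₃ ∈ X₁ →
        Φ (h₁ * h₂ * h₃) = Φ h₁ * Φ h₂ * Φ h₃) ∧
      (∀ g ∈ X₁, ∀ h ∈ X₁, Spez g h → Spez (Φ g) (Φ h))) := by
  refine ⟨fun H => ⟨fun h₁ m₁ h₂ m₂ h₃ m₃ _ _ hp => H h₁ m₁ h₂ m₂ h₃ m₃ hp, ?_⟩,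
    fun ⟨hlevel, hmono⟩ h₁ m₁ h₂ m₂ h₃ m₃ hp =>
      map_mul_mul_of_zset_total htot hsucc hlevel hmono m₁ m₂ m₃ hp⟩
  intro g mg h mh hgh
  -- `g ⇝ h` says `h = h * h * g`, a 3-product lying in `X₁`.
  have hh : h * h * g = h := by rw [← pow_two, ← hgh]
  have := H h mh h mh g mg (hh.symm ▸ mh)
  rw [hh] at this
  rw [Spez, pow_two, ← this]

theorem preserves_three_products_iff {F₁ F₂ : Type*}
    (X₁ : Set (F₁ → SignType)) (hX : IsFanSet X₁)
    (htot : ∀ g ∈ X₁, ∀ h ∈ X₁, Zset g ⊆ Zset h ∨ Zset h ⊆ Zset g)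
    (hsucc : ∀ g ∈ X₁, ∀ h ∈ X₁, Zset g ⊆ Zset h →
      ∃ f ∈ X₁, Spez g f ∧ Zset f = Zset h)
    (X₂ : Set (F₂ → SignType))
    (Φ : (F₁ → SignType) → (F₂ → SignType))
    (hΦ : ∀ g ∈ X₁, Φ g ∈ X₂) :
    (∀ h₁ ∈ X₁, ∀ h₂ ∈ X₁, ∀ h₃ ∈ X₁, h₁ * h₂ * h₃ ∈ X₁ →
        Φ (h₁ * h₂ * h₃) = Φ h₁ * Φ h₂ * Φ h₃)
    ↔
    ((∀ h₁ ∈ X₁, ∀ h₂ ∈ X₁, ∀ h₃ ∈ X₁,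
        Zset h₁ = Zset h₂ → Zset h₂ = Zset h₃ → h₁ * h₂ * h₃ ∈ X₁ →
        Φ (h₁ * h₂ * h₃) = Φ h₁ * Φ h₂ * Φ h₃) ∧
      (∀ g ∈ X₁, ∀ h ∈ X₁, Spez g h → Spez (Φ g) (Φ h))) :=
  preserves_three_products_iff_general X₁ htot hsucc Φ
end
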